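/- arXiv:1312.1769 — 2 statements merged into one kernel-verified Lean document; each statement's English description precedes it below -/
import Mathlib

section
/- Let H be a real symmetric 2×2 block matrix of the form [[A, B],[B, -A]] where A and B are real symmetric d×d matrices. If H is invertible, then H has exactly d positive eigenvalues and d negative eigenvalues (i.e. its negative index of inertia is d). -/
/-!
Conjugation by the orthogonal matrix `J = [[0, 1], [-1, 0]]` carries `[[A, B], [B, -A]]` to its
negative, so the spectrum of `H` is symmetric about `0`. Since `H` is invertible, `0` is not an
eigenvalue, and the `2d` eigenvalues split evenly into `d` negative and `d` positive ones.
-/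

open Matrix Polynomial Finset

namespace Matrix

theorem charpoly_neg_fromBlocks_self_neg {R m : Type*} [CommRing R] [Fintype m] [DecidableEq m]
    (A B : Matrix m m R) :
    (-fromBlocks A B B (-A)).charpoly = (fromBlocks A B B (-A)).charpoly := by
  set J : Matrix (m ⊕ m) (m ⊕ m) R := fromBlocks 0 1 (-1) 0
  have hJ : Jᵀ * J = 1 := by simp [J, fromBlocks_transpose, fromBlocks_multiply, fromBlocks_one]
  have hconj : J * fromBlocks A B B (-A) * Jᵀ = -fromBlocks A B B (-A) := by
    simp [J, fromBlocks_transpose, fromBlocks_multiply, fromBlocks_neg]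
  rw [← hconj, charpoly_mul_comm, ← Matrix.mul_assoc, hJ, Matrix.one_mul]

namespace IsHermitian

variable {𝕜 n : Type*} [RCLike 𝕜] [Fintype n] [DecidableEq n] {A : Matrix n n 𝕜}

theorem roots_charpoly_neg_eq_neg_eigenvalues (hA : A.IsHermitian) :
    (-A).charpoly.roots = univ.val.map (RCLike.ofReal ∘ (-hA.eigenvalues)) := by
  conv_lhs =>
    rw [hA.spectral_theorem, ← map_neg, Unitary.conjStarAlgAut_apply, charpoly_mul_comm,
      ← Matrix.mul_assoc]
  rw [Unitary.coe_star_mul_self, Matrix.one_mul, diagonal_neg, charpoly_diagonal, roots_prod]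
  · simp
  · simp [prod_ne_zero_iff, X_add_C_ne_zero]

theorem map_neg_eigenvalues_eq (hA : A.IsHermitian) (h : (-A).charpoly = A.charpoly) :
    univ.val.map (-hA.eigenvalues) = univ.val.map hA.eigenvalues := by
  apply Multiset.map_injective (RCLike.ofReal_injective (K := 𝕜))
  simpa [Multiset.map_map, hA.roots_charpoly_neg_eq_neg_eigenvalues,
    hA.roots_charpoly_eq_eigenvalues] using congrArg roots h

theorem card_eigenvalues_neg_eq_card_eigenvalues_pos (hA : A.IsHermitian)
    (h : (-A).charpoly = A.charpoly) :
    #{i | hA.eigenvalues i < 0} = #{i | 0 < hA.eigenvalues i} := by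
  have := congrArg (Multiset.countP (0 < ·)) (hA.map_neg_eigenvalues_eq h)
  simpa [Multiset.countP_map, ← filter_val] using this

theorem card_eigenvalues_neg_add_card_eigenvalues_pos (hA : A.IsHermitian) (hdet : A.det ≠ 0) :
    #{i | hA.eigenvalues i < 0} + #{i | 0 < hA.eigenvalues i} = Fintype.card n := by
  have hne (i : n) : hA.eigenvalues i ≠ 0 := by
    rw [hA.det_eq_prod_eigenvalues, prod_ne_zero_iff] at hdet
    exact_mod_cast hdet i (mem_univ i)
  rw [← card_univ, ← card_filter_add_card_filter_not (s := univ) (hA.eigenvalues · < 0)]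
  congr 2
  exact filter_congr fun i _ => by simp [lt_iff_le_and_ne, hne i]

end IsHermitian
end Matrix

theorem negative_inertia_of_block_matrix_general (d : ℕ)
    (A B : Matrix (Fin d) (Fin d) ℝ)
    (H : Matrix (Fin d ⊕ Fin d) (Fin d ⊕ Fin d) ℝ)
    (hHdef : H = Matrix.fromBlocks A B B (-A))
    (hH : H.IsHermitian) (hinv : IsUnit H.det) :
    (Finset.univ.filter fun i => hH.eigenvalues i < 0).card = d := by
  have hsymm : (-H).charpoly = H.charpoly := hHdef ▸ charpoly_neg_fromBlocks_self_neg A B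
  have htotal := hH.card_eigenvalues_neg_add_card_eigenvalues_pos hinv.ne_zero
  rw [← hH.card_eigenvalues_neg_eq_card_eigenvalues_pos hsymm, Fintype.card_sum,
    Fintype.card_fin] at htotal
  omega

/-- The Hessian of the real part of a holomorphic function at a nondegenerate
critical point, as a block matrix [[A,B],[B,-A]], has exactly `d` negative
eigenvalues. -/
theorem negative_inertia_of_block_matrix (d : ℕ)
    (A B : Matrix (Fin d) (Fin d) ℝ) (hA : A.IsSymm) (hB : B.IsSymm)
    (H : Matrix (Fin d ⊕ Fin d) (Fin d ⊕ Fin d) ℝ)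
    (hHdef : H = Matrix.fromBlocks A B B (-A))
    (hH : H.IsHermitian) (hinv : IsUnit H.det) :
    (Finset.univ.filter fun i => hH.eigenvalues i < 0).card = d :=
  negative_inertia_of_block_matrix_general d A B H hHdef hH hinv
end

section
/- Similarly, the negative twist evaluates to Σ_{b,d,e} B^{ab}_{cd} M_{be} M^{de} = q^{−n(n+2)/(2(n+1))} δ^a_c. -/
/-!
The contraction `Σ_e M_{be} M_{de}` of the antidiagonal matrix `M` is diagonal, with entries
`w_b = u^{2(n+1)(n-2b)}`. On the diagonal `d = b` only the `α`- and `(α - β)`-entries of `B`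
survive, so the twist is `δ^a_c (α w_a + (α - β) Σ_{b > a} w_b)`. Since `α w_b = β w_{b+1}`, this
telescopes to `α w_n = u^{-2n(n+2)}`, which is `q^{-n(n+2)/(2(n+1))}` for `q = u^{4(n+1)}`.
-/

open Finset

theorem sum_range_ite_mul_of_mul_eq_mul_succ {R : Type*} [CommRing R] {f : ℕ → R} {α β : R}
    (hf : ∀ b, α * f b = β * f (b + 1)) {a n : ℕ} (han : a ≤ n) :
    ∑ i ∈ range (n + 1), (if i = a then α else if a < i then α - β else 0) * f i = α * f n := by
  induction n, han using Nat.le_induction with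
  | base =>
    rw [sum_range_succ, if_pos rfl, add_eq_right]
    exact sum_eq_zero fun i hi => by
      rw [if_neg (by simp at hi; omega), if_neg (by simp at hi; omega), zero_mul]
  | succ n han ih =>
    rw [sum_range_succ, ih, if_neg (by omega), if_pos (by omega), hf]
    ring

theorem sum_antidiagonal_mul_antidiagonal {R : Type*} [CommSemiring R] {n : ℕ}
    (m : Fin (n + 1) → R) (b d : Fin (n + 1)) :
    ∑ e : Fin (n + 1),
        (if (b : ℕ) + e = n then m b else 0) * (if (d : ℕ) + e = n then m d else 0) =
      if b = d then m b ^ 2 else 0 := by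
  have hrev : ∀ x e : Fin (n + 1), ((x : ℕ) + e = n ↔ e = x.rev) := fun x e => by
    rw [Fin.ext_iff, Fin.val_rev]
    omega
  rcases eq_or_ne b d with rfl | hbd
  · simp [hrev, sq]
  · simp [hrev, hbd, hbd.symm]

theorem ite_braiding_diag {R : Type*} [Zero R] {n : ℕ} (x y z : R) (a b c : Fin (n + 1)) :
    (if a = b then (if c = a ∧ b = a then x else 0)
      else if c = b ∧ b = a then z
      else if (a : ℕ) < b ∧ c = a ∧ b = b then y else 0) =
      if a = c then (if b = a then x else if (a : ℕ) < b then y else 0) else 0 := by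
  by_cases hab : a = b
  · subst hab
    simp [eq_comm]
  · by_cases hac : a = c
    · subst hac
      simp [hab, Ne.symm hab]
    · simp [hab, Ne.symm hab, hac, Ne.symm hac]

theorem negative_twist_value_general (n : ℕ) (u α β γ : ℂ) (hu : u ≠ 0)
    (hα : α = u ^ (-(2 * n : ℤ))) (hβ : β = u ^ (2 * (n + 2)))
    (Bm : Fin (n + 1) → Fin (n + 1) → Fin (n + 1) → Fin (n + 1) → ℂ)
    (hB : Bm = fun (a b c d : Fin (n + 1)) =>
      if a = b then (if c = a ∧ d = a then α else 0)
      else if c = b ∧ d = a then γ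
      else if (a : ℕ) < b ∧ c = a ∧ d = b then α - β else 0)
    (M : Fin (n + 1) → Fin (n + 1) → ℂ)
    (hM : M = fun (a b : Fin (n + 1)) =>
      if (a : ℕ) + (b : ℕ) = n then u ^ ((n + 1 : ℤ) * ((n : ℤ) - 2 * (a : ℤ))) else 0) :
    ∀ a c : Fin (n + 1),
      (∑ b, ∑ d, ∑ e, Bm a b c d * M b e * M d e) =
        if a = c then u ^ (-(2 * (n : ℤ) * ((n : ℤ) + 2))) else 0 := by
  intro a c
  set w : ℕ → ℂ := fun i => u ^ (2 * ((n : ℤ) + 1) * ((n : ℤ) - 2 * i)) with hw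
  have hMM : ∀ b d : Fin (n + 1), ∑ e, M b e * M d e = if b = d then w b else 0 := fun b d => by
    subst hM
    refine (sum_antidiagonal_mul_antidiagonal
      (fun b : Fin (n + 1) => u ^ ((n + 1 : ℤ) * ((n : ℤ) - 2 * (b : ℤ)))) b d).trans ?_
    rw [hw, ← zpow_natCast, ← zpow_mul]
    push_cast
    ring_nf
  have hcollapse : ∑ b, ∑ d, ∑ e, Bm a b c d * M b e * M d e = ∑ b, Bm a b c b * w b := by
    simp_rw [mul_assoc, ← mul_sum, hMM, mul_ite, mul_zero, sum_ite_eq, mem_univ, if_true]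
  have hBdiag : ∀ b : Fin (n + 1), Bm a b c b =
      if a = c then (if b = a then α else if (a : ℕ) < b then α - β else 0) else 0 := by
    subst hB
    exact fun b => ite_braiding_diag α (α - β) γ a b c
  have hshift : ∀ i, α * w i = β * w (i + 1) := fun i => by
    rw [hα, hβ, ← zpow_natCast, hw, ← zpow_add₀ hu, ← zpow_add₀ hu]
    congr 1
    push_cast
    ring
  rw [hcollapse]
  split_ifs with hac
  · subst hac
    simp only [hBdiag, if_true, Fin.ext_iff]
    rw [Fin.sum_univ_eq_sum_range
        (fun i => (if i = (a : ℕ) then α else if (a : ℕ) < i then α - β else 0) * w i),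
      sum_range_ite_mul_of_mul_eq_mul_succ hshift a.is_le, hα, hw, ← zpow_add₀ hu]
    congr 1
    ring
  · simp [hBdiag, hac]

/-- The negative twist: `Σ B^{ab}_{cd} M_{be} M^{de} = q^{−n(n+2)/(2(n+1))} δ^a_c`.
Here `u` is a fixed root with `u^{4(n+1)} = q`, so `γ = u²`, `α = u^{−2n}`,
`β = u^{2(n+2)}`, `M_{ab} = u^{(n+1)(n−2a)} δ_{a+b,n}`, and the twist value is
`q^{−n(n+2)/(2(n+1))} = u^{−2n(n+2)}`. -/
theorem negative_twist_value (n : ℕ) (q u α β γ : ℂ) (hu : u ≠ 0)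
    (hq : u ^ (4 * (n + 1)) = q)
    (hγ : γ = u ^ 2) (hα : α = u ^ (-(2 * n : ℤ))) (hβ : β = u ^ (2 * (n + 2)))
    (Bm : Fin (n + 1) → Fin (n + 1) → Fin (n + 1) → Fin (n + 1) → ℂ)
    (hB : Bm = fun (a b c d : Fin (n + 1)) =>
      if a = b then (if c = a ∧ d = a then α else 0)
      else if c = b ∧ d = a then γ
      else if (a : ℕ) < b ∧ c = a ∧ d = b then α - β else 0)
    (M : Fin (n + 1) → Fin (n + 1) → ℂ)
    (hM : M = fun (a b : Fin (n + 1)) =>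
      if (a : ℕ) + (b : ℕ) = n then u ^ ((n + 1 : ℤ) * ((n : ℤ) - 2 * (a : ℤ))) else 0) :
    ∀ a c : Fin (n + 1),
      (∑ b, ∑ d, ∑ e, Bm a b c d * M b e * M d e) =
        if a = c then u ^ (-(2 * (n : ℤ) * ((n : ℤ) + 2))) else 0 :=
  negative_twist_value_general n u α β γ hu hα hβ Bm hB M hM
end
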